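/- arXiv:math/0007059 — 7 statements merged into one kernel-verified Lean document; each statement's English description precedes it below -/
import Mathlib

section
/- Let X : ℝⁿ → ℝⁿ be a C¹ vector field, f(x) = ½‖X(x)‖², and F(x) = DX(x) − (DX(x))ᵀ. If x : I → ℝⁿ is a solution of the flow equation x′(t) = X(x(t)) on an open interval I, then x satisfies the geometric dynamics equation x″(t) = ∇f(x(t)) + F(x(t)) (x′(t)) for all t ∈ I. -/
/-!
Differentiating `x' = X ∘ x` once more gives `x'' = DX(x) x' = DX(x) X(x)`. On the other hand,
`∇f = (DX)ᵀ X` by the chain rule for `½‖X‖²`, so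
`∇f(x) + F(x) x' = (DX)ᵀ X(x) + (DX - (DX)ᵀ) X(x) = DX(x) X(x)` as well.
-/

theorem HasFDerivAt.hasGradientAt_half_norm_sq {E F : Type*}
    [NormedAddCommGroup E] [InnerProductSpace ℝ E] [CompleteSpace E]
    [NormedAddCommGroup F] [InnerProductSpace ℝ F] [CompleteSpace F]
    {X : E → F} {A : E →L[ℝ] F} {x : E} (hX : HasFDerivAt X A x) :
    HasGradientAt (fun y ↦ (1 / 2) * ‖X y‖ ^ 2) (ContinuousLinearMap.adjoint A (X x)) x := by
  rw [hasGradientAt_iff_hasFDerivAt]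
  refine (hX.norm_sq.const_mul (1 / 2)).congr_fderiv ?_
  ext v
  simp [ContinuousLinearMap.adjoint_inner_left]

theorem hasDerivAt_deriv_of_flow {E : Type*} [NormedAddCommGroup E] [NormedSpace ℝ E]
    {X : E → E} {c : ℝ → E} {s : Set ℝ} (hs : IsOpen s)
    (hc : ∀ t ∈ s, HasDerivAt c (X (c t)) t) {t : ℝ} (ht : t ∈ s)
    (hX : DifferentiableAt ℝ X (c t)) :
    HasDerivAt (deriv c) (fderiv ℝ X (c t) (X (c t))) t := by
  have hderiv : deriv c =ᶠ[nhds t] fun s ↦ X (c s) :=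
    Filter.eventually_of_mem (hs.mem_nhds ht) fun s hs ↦ (hc s hs).deriv
  exact (hX.hasFDerivAt.comp_hasDerivAt t (hc t ht)).congr_of_eventuallyEq hderiv

/-- A solution of the flow `x' = X(x)` of a C¹ vector field satisfies the
geometric dynamics equation `x'' = ∇f(x) + F(x)(x')`, where `f = ½‖X‖²` is the energy
and `F = DX - (DX)ᵀ` is the external tensor field. -/
theorem flow_solution_geometric_dynamics {n : ℕ}
    (X : EuclideanSpace ℝ (Fin n) → EuclideanSpace ℝ (Fin n))
    (hX : ContDiff ℝ 1 X)
    (f : EuclideanSpace ℝ (Fin n) → ℝ)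
    (hf : ∀ x, f x = (1 / 2) * ‖X x‖ ^ 2)
    (F : EuclideanSpace ℝ (Fin n) →
      EuclideanSpace ℝ (Fin n) →L[ℝ] EuclideanSpace ℝ (Fin n))
    (hF : ∀ x, F x = fderiv ℝ X x - ContinuousLinearMap.adjoint (fderiv ℝ X x))
    (a b : ℝ) (c : ℝ → EuclideanSpace ℝ (Fin n))
    (hc : ∀ t ∈ Set.Ioo a b, HasDerivAt c (X (c t)) t) :
    ∀ t ∈ Set.Ioo a b,
      HasDerivAt (deriv c) (gradient f (c t) + F (c t) (deriv c t)) t := by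
  intro t ht
  have hXd : DifferentiableAt ℝ X (c t) := hX.differentiable one_ne_zero _
  have hgrad : gradient f (c t) = ContinuousLinearMap.adjoint (fderiv ℝ X (c t)) (X (c t)) := by
    rw [funext hf]
    exact hXd.hasFDerivAt.hasGradientAt_half_norm_sq.gradient
  rw [hgrad, hF, (hc t ht).deriv, sub_apply, add_sub_cancel]
  exact hasDerivAt_deriv_of_flow isOpen_Ioo hc ht hXd
end

section
/- Let X : ℝⁿ → ℝⁿ be a C¹ vector field, f(x) = ½‖X(x)‖², F(x) = DX(x) − (DX(x))ᵀ, and define the Lagrangian L(x, v) = ½‖v − X(x)‖² = ½‖v‖² − ⟨X(x), v⟩ + f(x). A C² curve x : I → ℝⁿ satisfies the Euler–Lagrange equations of L, namely d/dt (∂L/∂v)(x(t), x′(t)) = (∂L/∂x)(x(t), x′(t)), if and only if x″(t) = ∇f(x(t)) + F(x(t)) (x′(t)) for all t ∈ I. Hence the trajectories of the geometric dynamics x″ = ∇f + F(x′) are exactly the extremals of L. -/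
open scoped RealInnerProductSpace

/-!
The velocity gradient of `L` is `∂L/∂v (x, v) = v - X x`, and its position gradient is
`∂L/∂x (x, v) = (DX x)ᵀ (X x - v)`, while `∇f = (DX)ᵀ X`. Along a curve, `d/dt (c' - X ∘ c)` is
`c'' - DX c'`, so the Euler–Lagrange equation reads `c'' - DX c' = (DX)ᵀ X - (DX)ᵀ c'`, which is
`c'' = ∇f + (DX - (DX)ᵀ) c'` rearranged.
-/

open ContinuousLinearMap

section HalfNormSq

variable {E F : Type*} [NormedAddCommGroup E] [InnerProductSpace ℝ E] [CompleteSpace E]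
  [NormedAddCommGroup F] [InnerProductSpace ℝ F] [CompleteSpace F]

theorem HasFDerivAt.hasGradientAt_half_norm_sq_s8 {g : E → F} {D : E →L[ℝ] F} {x : E}
    (hg : HasFDerivAt g D x) :
    HasGradientAt (fun y => (1 / 2 : ℝ) * ‖g y‖ ^ 2) (adjoint D (g x)) x := by
  rw [hasGradientAt_iff_hasFDerivAt]
  refine (hg.norm_sq.const_mul (1 / 2 : ℝ)).congr_fderiv ?_
  ext h
  simp [adjoint_inner_left]

theorem gradient_half_norm_sq_sub_const (w u : E) :
    gradient (fun v => (1 / 2 : ℝ) * ‖v - w‖ ^ 2) u = u - w := by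
  have h := ((hasFDerivAt_id u).sub_const w).hasGradientAt_half_norm_sq_s8.gradient
  rwa [adjoint_id] at h

theorem HasFDerivAt.gradient_half_norm_sq_const_sub {X : E → F} {D : E →L[ℝ] F} {x : E}
    (hX : HasFDerivAt X D x) (u : F) :
    gradient (fun y => (1 / 2 : ℝ) * ‖u - X y‖ ^ 2) x = adjoint D (X x - u) := by
  rw [(hX.const_sub u).hasGradientAt_half_norm_sq_s8.gradient, map_neg, neg_apply, ← map_neg,
    neg_sub]

end HalfNormSq

theorem HasDerivAt.hasDerivAt_iff_eq {𝕜 F : Type*} [NontriviallyNormedField 𝕜]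
    [NormedAddCommGroup F] [NormedSpace 𝕜 F] {f : 𝕜 → F} {f' y : F} {t : 𝕜}
    (hf : HasDerivAt f f' t) :
    HasDerivAt f y t ↔ y = f' :=
  ⟨fun hy => hy.unique hf, fun hy => hy ▸ hf⟩

/-- For a C¹ vector field `X`, energy `f = ½‖X‖²`, external tensor
`F = DX - (DX)ᵀ`, and the Lagrangian `L(x,v) = ½‖v - X(x)‖²`, a C² curve satisfies
the Euler–Lagrange equations of `L` iff it satisfies the geometric dynamics
`x'' = ∇f(x) + F(x)(x')`: the trajectories of the geometric dynamics are exactly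
the extremals of `L`. -/
theorem geometric_dynamics_iff_euler_lagrange {n : ℕ}
    (X : EuclideanSpace ℝ (Fin n) → EuclideanSpace ℝ (Fin n))
    (hX : ContDiff ℝ 1 X)
    (f : EuclideanSpace ℝ (Fin n) → ℝ)
    (hf : ∀ x, f x = (1 / 2) * ‖X x‖ ^ 2)
    (F : EuclideanSpace ℝ (Fin n) →
      EuclideanSpace ℝ (Fin n) →L[ℝ] EuclideanSpace ℝ (Fin n))
    (hF : ∀ x, F x = fderiv ℝ X x - ContinuousLinearMap.adjoint (fderiv ℝ X x))
    (L : EuclideanSpace ℝ (Fin n) → EuclideanSpace ℝ (Fin n) → ℝ)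
    (hL : ∀ x v, L x v = (1 / 2) * ‖v - X x‖ ^ 2)
    (a b : ℝ) (c c' c'' : ℝ → EuclideanSpace ℝ (Fin n))
    (hc : ∀ t ∈ Set.Ioo a b, HasDerivAt c (c' t) t)
    (hc' : ∀ t ∈ Set.Ioo a b, HasDerivAt c' (c'' t) t) :
    (∀ t ∈ Set.Ioo a b,
        HasDerivAt (fun s => gradient (fun v => L (c s) v) (c' s))
          (gradient (fun x => L x (c' t)) (c t)) t) ↔
      (∀ t ∈ Set.Ioo a b, c'' t = gradient f (c t) + F (c t) (c' t)) := by
  have hDX : ∀ x, HasFDerivAt X (fderiv ℝ X x) x :=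
    fun x => (hX.differentiable one_ne_zero x).hasFDerivAt
  have gradient_f : ∀ x, gradient f x = adjoint (fderiv ℝ X x) (X x) := fun x => by
    rw [funext hf]; exact (hDX x).hasGradientAt_half_norm_sq_s8.gradient
  simp only [hL, gradient_half_norm_sq_sub_const, (hDX _).gradient_half_norm_sq_const_sub]
  refine forall₂_congr fun t ht => ?_
  refine ((hc' t ht).sub ((hDX (c t)).comp_hasDerivAt t (hc t ht))).hasDerivAt_iff_eq.trans ?_
  rw [gradient_f, hF, map_sub, sub_apply, eq_comm, sub_eq_iff_eq_add]
  constructor <;> intro h <;> rw [h] <;> abel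
end

section
/- (Lorentz–Udriste world-force law, potential case, Euclidean metric.) Let f : ℝⁿ → ℝ be C¹, let H₀ ∈ ℝ, and let x : I → ℝⁿ be a nonconstant C² solution of x″(t) = ∇f(x(t)) with constant Hamiltonian ½‖x′(t)‖² − f(x(t)) = H₀ and with φ(x(t)) := H₀ + f(x(t)) > 0 for all t ∈ I. Define the reparametrization s(t) = ∫_{t₀}^{t} 2 φ(x(τ)) dτ (a strictly increasing C¹ bijection onto an interval J) and set y(s) = x(t(s)) where t(s) is its inverse. Then y satisfies the geodesic equation of the conformal (Jacobi) metric ḡ = φ · δ, namely ÿ(s) + (1/φ(y(s))) ( ⟨∇φ(y(s)), ẏ(s)⟩ ẏ(s) − ½‖ẏ(s)‖² ∇φ(y(s)) ) = 0 for all s ∈ J; i.e., every such trajectory is a pregeodesic of the Riemann–Jacobi manifold (ℝⁿ restricted to {φ > 0}, ḡ = (H₀ + f) δ). -/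
/-!
Write `λ := 2 φ ∘ c = σ'`. The chain rule for `y ∘ σ = c`, applied once to `y` and once to `y'`,
gives `ẏ = λ⁻¹ c'` and `ÿ = λ⁻¹ (λ⁻¹ c')'`. Conservation of energy says `‖c'‖² = λ`, and Newton's
law gives both `∇φ = ∇f = c''` along the curve and `(φ ∘ c)' = ⟪c'', c'⟫`. Substituting these,
`ÿ` and the Christoffel term of `(H₀ + f) δ` cancel by a pointwise algebraic identity.
-/

open Set Filter Topology
open scoped RealInnerProductSpace

theorem hasDerivAt_intervalIntegral_of_continuousOn_Ioo {E : Type*} [NormedAddCommGroup E]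
    [NormedSpace ℝ E] [CompleteSpace E] {g : ℝ → E} {a b t₀ t : ℝ}
    (hg : ContinuousOn g (Ioo a b)) (ht₀ : t₀ ∈ Ioo a b) (ht : t ∈ Ioo a b) :
    HasDerivAt (fun u => ∫ τ in t₀..u, g τ) (g t) t :=
  intervalIntegral.integral_hasDerivAt_right
    (hg.mono (ordConnected_Ioo.uIcc_subset ht₀ ht)).intervalIntegrable
    (hg.stronglyMeasurableAtFilter isOpen_Ioo t ht)
    (hg.continuousAt (isOpen_Ioo.mem_nhds ht))

theorem HasDerivAt.eq_inv_smul_of_eventuallyEq_comp {E : Type*} [NormedAddCommGroup E]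
    [NormedSpace ℝ E] {y c : ℝ → E} {σ : ℝ → ℝ} {t σ' : ℝ} {v w : E}
    (hy : HasDerivAt y v (σ t)) (hσ : HasDerivAt σ σ' t) (hσ' : σ' ≠ 0)
    (hc : HasDerivAt c w t) (hyc : y ∘ σ =ᶠ[𝓝 t] c) :
    v = σ'⁻¹ • w := by
  have hw : w = σ' • v := hc.unique ((hy.scomp t hσ).congr_of_eventuallyEq hyc.symm)
  rw [hw, inv_smul_smul₀ hσ']

theorem HasGradientAt.comp_hasDerivAt {F : Type*} [NormedAddCommGroup F]
    [InnerProductSpace ℝ F] [CompleteSpace F] {f : F → ℝ} {c : ℝ → F} {g v : F} {t : ℝ}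
    (hf : HasGradientAt f g (c t)) (hc : HasDerivAt c v t) :
    HasDerivAt (f ∘ c) ⟪g, v⟫ t := by
  simpa only [InnerProductSpace.toDual_apply_apply] using hf.hasFDerivAt.comp_hasDerivAt t hc

/-- `λ⁻¹ • (λ⁻¹ • g + (λ⁻¹)' • v)` with `λ = 2p` and `λ' = 2⟪g, v⟫` is the second derivative in the
new parameter; on the energy shell `‖v‖² = 2p` it is cancelled by the Christoffel term. -/
theorem conformal_geodesic_identity {F : Type*} [NormedAddCommGroup F] [InnerProductSpace ℝ F]
    {p : ℝ} (hp : p ≠ 0) {v g : F} (hv : ‖v‖ ^ 2 = 2 * p) :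
    (2 * p)⁻¹ • ((2 * p)⁻¹ • g + (-(2 * ⟪g, v⟫) / (2 * p) ^ 2) • v)
      + p⁻¹ • (⟪g, (2 * p)⁻¹ • v⟫ • (2 * p)⁻¹ • v
        - ((1 / 2) * ‖(2 * p)⁻¹ • v‖ ^ 2) • g) = 0 := by
  simp only [real_inner_smul_right, norm_smul, mul_pow, Real.norm_eq_abs, sq_abs, hv]
  match_scalars <;> field_simp <;> ring

theorem lorentz_udriste_world_force_law_potential_general {n : ℕ}
    (f : EuclideanSpace ℝ (Fin n) → ℝ)
    (hf : ContDiff ℝ 1 f)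
    (H₀ a b t₀ : ℝ) (ht₀ : t₀ ∈ Set.Ioo a b)
    (c c' c'' : ℝ → EuclideanSpace ℝ (Fin n))
    (hc : ∀ t ∈ Set.Ioo a b, HasDerivAt c (c' t) t)
    (hc' : ∀ t ∈ Set.Ioo a b, HasDerivAt c' (c'' t) t)
    (hode : ∀ t ∈ Set.Ioo a b, c'' t = gradient f (c t))
    (hH : ∀ t ∈ Set.Ioo a b, (1 / 2) * ‖c' t‖ ^ 2 - f (c t) = H₀)
    (φ : EuclideanSpace ℝ (Fin n) → ℝ)
    (hφ : ∀ x, φ x = H₀ + f x)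
    (hpos : ∀ t ∈ Set.Ioo a b, 0 < φ (c t))
    (σ : ℝ → ℝ)
    (hσ : ∀ t, σ t = ∫ τ in t₀..t, 2 * φ (c τ))
    (y y' y'' : ℝ → EuclideanSpace ℝ (Fin n))
    (hy : ∀ t ∈ Set.Ioo a b, y (σ t) = c t)
    (hy' : ∀ s ∈ σ '' Set.Ioo a b, HasDerivAt y (y' s) s)
    (hy'' : ∀ s ∈ σ '' Set.Ioo a b, HasDerivAt y' (y'' s) s) :
    StrictMonoOn σ (Set.Ioo a b) ∧
      ∀ s ∈ σ '' Set.Ioo a b,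
        y'' s + (φ (y s))⁻¹ •
            (⟪gradient φ (y s), y' s⟫ • y' s
              - ((1 / 2) * ‖y' s‖ ^ 2) • gradient φ (y s)) = 0 := by
  have hφf : φ = fun x => H₀ + f x := funext hφ
  have hgrad : gradient φ = gradient f := by
    ext1 x; simp only [gradient, hφf, fderiv_const_add]
  have hφ_diff : Differentiable ℝ φ := hφf ▸ (hf.differentiable one_ne_zero).const_add H₀
  have hφc : ∀ t ∈ Ioo a b, HasDerivAt (φ ∘ c) ⟪c'' t, c' t⟫ t := fun t ht => by
    simpa only [hgrad, ← hode t ht] using (hφ_diff (c t)).hasGradientAt.comp_hasDerivAt (hc t ht)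
  have hspeed : ∀ t ∈ Ioo a b, 2 * φ (c t) ≠ 0 := fun t ht => by linarith [hpos t ht]
  have hσ' : ∀ t ∈ Ioo a b, HasDerivAt σ (2 * φ (c t)) t := fun t ht =>
    funext hσ ▸ hasDerivAt_intervalIntegral_of_continuousOn_Ioo
      (fun u hu => ((hφc u hu).continuousAt.const_mul 2).continuousWithinAt) ht₀ ht
  refine ⟨strictMonoOn_of_hasDerivWithinAt_pos (convex_Ioo a b)
    (fun t ht => (hσ' t ht).continuousAt.continuousWithinAt)
    (fun t ht => (hσ' t (interior_subset ht)).hasDerivWithinAt)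
    (fun t ht => by linarith [hpos t (interior_subset ht)]), ?_⟩
  have hvel : ∀ t ∈ Ioo a b, y' (σ t) = (2 * φ (c t))⁻¹ • c' t := fun t ht =>
    (hy' _ ⟨t, ht, rfl⟩).eq_inv_smul_of_eventuallyEq_comp (hσ' t ht) (hspeed t ht) (hc t ht)
      (eventually_of_mem (isOpen_Ioo.mem_nhds ht) hy)
  rintro _ ⟨t, ht, rfl⟩
  have hacc := (hy'' _ ⟨t, ht, rfl⟩).eq_inv_smul_of_eventuallyEq_comp (hσ' t ht) (hspeed t ht)
    ((((hφc t ht).const_mul 2).inv (hspeed t ht)).smul (hc' t ht))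
    (eventually_of_mem (isOpen_Ioo.mem_nhds ht) hvel)
  have henergy : ‖c' t‖ ^ 2 = 2 * φ (c t) := by linarith [hH t ht, hφ (c t)]
  rw [hy t ht, hacc, hvel t ht, hgrad, ← hode t ht]
  exact conformal_geodesic_identity (hpos t ht).ne' henergy

/-- Lorentz–Udriste world-force law, potential case, Euclidean metric:
every nonconstant C² solution of `x'' = ∇f(x)` with constant Hamiltonian
`½‖x'‖² - f(x) = H₀` and `φ := H₀ + f ∘ x > 0`, reparametrized by the strictly
increasing map `s(t) = ∫_{t₀}^t 2 φ(x(τ)) dτ`, satisfies the geodesic equation of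
the conformal Jacobi metric `ḡ = (H₀ + f) δ`:
`ÿ + (1/φ(y)) (⟪∇φ(y), ẏ⟫ ẏ - ½‖ẏ‖² ∇φ(y)) = 0` on `J = σ '' I`;
i.e. the trajectory is a pregeodesic of the Riemann–Jacobi manifold
`({φ > 0}, (H₀ + f) δ)`. -/
theorem lorentz_udriste_world_force_law_potential {n : ℕ}
    (f : EuclideanSpace ℝ (Fin n) → ℝ)
    (hf : ContDiff ℝ 1 f)
    (H₀ a b t₀ : ℝ) (ht₀ : t₀ ∈ Set.Ioo a b)
    (c c' c'' : ℝ → EuclideanSpace ℝ (Fin n))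
    (hc : ∀ t ∈ Set.Ioo a b, HasDerivAt c (c' t) t)
    (hc' : ∀ t ∈ Set.Ioo a b, HasDerivAt c' (c'' t) t)
    (hode : ∀ t ∈ Set.Ioo a b, c'' t = gradient f (c t))
    (hnonconst : ∃ s ∈ Set.Ioo a b, ∃ t ∈ Set.Ioo a b, c s ≠ c t)
    (hH : ∀ t ∈ Set.Ioo a b, (1 / 2) * ‖c' t‖ ^ 2 - f (c t) = H₀)
    (φ : EuclideanSpace ℝ (Fin n) → ℝ)
    (hφ : ∀ x, φ x = H₀ + f x)
    (hpos : ∀ t ∈ Set.Ioo a b, 0 < φ (c t))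
    (σ : ℝ → ℝ)
    (hσ : ∀ t, σ t = ∫ τ in t₀..t, 2 * φ (c τ))
    (y y' y'' : ℝ → EuclideanSpace ℝ (Fin n))
    (hy : ∀ t ∈ Set.Ioo a b, y (σ t) = c t)
    (hy' : ∀ s ∈ σ '' Set.Ioo a b, HasDerivAt y (y' s) s)
    (hy'' : ∀ s ∈ σ '' Set.Ioo a b, HasDerivAt y' (y'' s) s) :
    StrictMonoOn σ (Set.Ioo a b) ∧
      ∀ s ∈ σ '' Set.Ioo a b,
        y'' s + (φ (y s))⁻¹ •
            (⟪gradient φ (y s), y' s⟫ • y' s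
              - ((1 / 2) * ‖y' s‖ ^ 2) • gradient φ (y s)) = 0 :=
  lorentz_udriste_world_force_law_potential_general f hf H₀ a b t₀ ht₀ c c' c'' hc hc' hode hH φ hφ
    hpos σ hσ y y' y'' hy hy' hy''
end

section
/- Let X : ℝⁿ → ℝⁿ be a C¹ vector field, f(x) = ½‖X(x)‖², F(x) = DX(x) − (DX(x))ᵀ, and define H : ℝⁿ × ℝⁿ → ℝ by H(x, y) = ½‖y‖² − f(x). Define the 2-form Ω₂ on ℝⁿ × ℝⁿ at the point (x, y) by Ω₂((u₁, v₁), (u₂, v₂)) = ⟨F(x) u₁, u₂⟩ + ⟨u₁, v₂⟩ − ⟨u₂, v₁⟩. Then Ω₂ is a nondegenerate antisymmetric bilinear form at each point, and the vector field V(x, y) = (y, ∇f(x) + F(x) y) is the Hamilton gradient of H with respect to Ω₂: for every (x, y) and every w = (w₁, w₂), Ω₂((V(x, y)), (w₁, w₂)) = dH(x, y)(w₁, w₂). Consequently the geometric dynamics x″ = ∇f(x) + F(x) x′ lifts to the Hamilton equations (x′, y′) = V(x, y) on the tangent bundle ℝⁿ × ℝⁿ. -/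
/-!
`Ω₂` is the canonical symplectic form on `ℝⁿ × ℝⁿ` twisted by the skew operator
`F(x) = DX(x) - DX(x)ᵀ`. Its antisymmetry is the skewness of `F(x)`; nondegeneracy holds for any
twist, by testing against `(0, u₁)` and then `(-u₂, 0)`. On `V(x, y) = (y, ∇f(x) + F(x) y)` the
two occurrences of `F(x) y` cancel, leaving `⟪y, w₂⟫ - ⟪∇f(x), w₁⟫ = dH(x, y) w`.
-/

open scoped RealInnerProductSpace
open ContinuousLinearMap

section TwistedSymplecticForm

variable {E : Type*} [NormedAddCommGroup E] [InnerProductSpace ℝ E]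

def twistedSymplecticForm (S : E →L[ℝ] E) (u v : E × E) : ℝ :=
  ⟪S u.1, v.1⟫ + ⟪u.1, v.2⟫ - ⟪v.1, u.2⟫

theorem inner_sub_adjoint_apply_swap [CompleteSpace E] (A : E →L[ℝ] E) (u v : E) :
    ⟪(A - adjoint A) u, v⟫ = -⟪(A - adjoint A) v, u⟫ := by
  simp only [sub_apply, inner_sub_left, adjoint_inner_left]
  rw [real_inner_comm u (A v), real_inner_comm v (A u)]
  ring

theorem twistedSymplecticForm_antisymm {S : E →L[ℝ] E} (hS : ∀ u v, ⟪S u, v⟫ = -⟪S v, u⟫)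
    (u v : E × E) : twistedSymplecticForm S u v = -twistedSymplecticForm S v u := by
  simp only [twistedSymplecticForm, hS u.1 v.1]
  ring

theorem eq_zero_of_twistedSymplecticForm_eq_zero (S : E →L[ℝ] E) {u : E × E}
    (hu : ∀ v, twistedSymplecticForm S u v = 0) : u = 0 := by
  have h₁ : u.1 = 0 := by
    simpa [twistedSymplecticForm] using hu (0, u.1)
  have h₂ : u.2 = 0 := by
    simpa [twistedSymplecticForm, h₁] using hu (-u.2, 0)
  exact Prod.ext h₁ h₂

theorem twistedSymplecticForm_hamiltonVector (S : E →L[ℝ] E) (g y : E) (w : E × E) :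
    twistedSymplecticForm S (y, g + S y) w = ⟪y, w.2⟫ - ⟪g, w.1⟫ := by
  simp only [twistedSymplecticForm, inner_add_right, real_inner_comm w.1]
  ring

theorem hasFDerivAt_half_norm_sq_snd_sub_comp_fst [CompleteSpace E] {f : E → ℝ} {p : E × E}
    (hf : DifferentiableAt ℝ f p.1) :
    HasFDerivAt (fun q : E × E => 1 / 2 * ‖q.2‖ ^ 2 - f q.1)
      ((innerSL ℝ p.2).comp (snd ℝ E E) - (innerSL ℝ (gradient f p.1)).comp (fst ℝ E E)) p := by
  have hnorm := (hasFDerivAt_snd (p := p)).norm_sq.const_mul (1 / 2 : ℝ)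
  have hf' := hf.hasGradientAt.hasFDerivAt.comp p hasFDerivAt_fst
  refine (hnorm.sub hf').congr_fderiv ?_
  ext w <;> simp

end TwistedSymplecticForm

theorem hasDerivAt_prodMk_iff_eq {𝕜 F G : Type*} [NontriviallyNormedField 𝕜]
    [NormedAddCommGroup F] [NormedSpace 𝕜 F] [NormedAddCommGroup G] [NormedSpace 𝕜 G]
    {c : 𝕜 → F} {d : 𝕜 → G} {c' : F} {d' q : G} {t : 𝕜}
    (hc : HasDerivAt c c' t) (hd : HasDerivAt d d' t) :
    HasDerivAt (fun s => (c s, d s)) (c', q) t ↔ d' = q :=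
  ⟨fun h => hd.unique h.snd, fun h => h ▸ hc.prodMk hd⟩

/-- With `H(x,y) = ½‖y‖² - f(x)` (`f = ½‖X‖²`), `F = DX - (DX)ᵀ`, and
the 2-form `Ω₂` at `(x,y)` given by
`Ω₂((u₁,v₁),(u₂,v₂)) = ⟪F(x)u₁, u₂⟫ + ⟪u₁, v₂⟫ - ⟪u₂, v₁⟫`,
the form `Ω₂` is antisymmetric and nondegenerate at every point, and
`V(x,y) = (y, ∇f(x) + F(x)y)` is the Hamilton gradient of `H` with respect to `Ω₂`.
Consequently the geometric dynamics `x'' = ∇f(x) + F(x)x'` lifts to the Hamilton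
equations `(x',y') = V(x,y)`. -/
theorem geometric_dynamics_hamiltonian_lift {n : ℕ}
    (X : EuclideanSpace ℝ (Fin n) → EuclideanSpace ℝ (Fin n))
    (hX : ContDiff ℝ 1 X)
    (f : EuclideanSpace ℝ (Fin n) → ℝ)
    (hf : ∀ x, f x = (1 / 2) * ‖X x‖ ^ 2)
    (F : EuclideanSpace ℝ (Fin n) →
      EuclideanSpace ℝ (Fin n) →L[ℝ] EuclideanSpace ℝ (Fin n))
    (hF : ∀ x, F x = fderiv ℝ X x - ContinuousLinearMap.adjoint (fderiv ℝ X x))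
    (H : EuclideanSpace ℝ (Fin n) × EuclideanSpace ℝ (Fin n) → ℝ)
    (hH : ∀ p, H p = (1 / 2) * ‖p.2‖ ^ 2 - f p.1)
    (Ω₂ : EuclideanSpace ℝ (Fin n) × EuclideanSpace ℝ (Fin n) →
      EuclideanSpace ℝ (Fin n) × EuclideanSpace ℝ (Fin n) →
      EuclideanSpace ℝ (Fin n) × EuclideanSpace ℝ (Fin n) → ℝ)
    (hΩ₂ : ∀ p u v, Ω₂ p u v = ⟪F p.1 u.1, v.1⟫ + ⟪u.1, v.2⟫ - ⟪v.1, u.2⟫)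
    (V : EuclideanSpace ℝ (Fin n) × EuclideanSpace ℝ (Fin n) →
      EuclideanSpace ℝ (Fin n) × EuclideanSpace ℝ (Fin n))
    (hV : ∀ p, V p = (p.2, gradient f p.1 + F p.1 p.2)) :
    (∀ p u v, Ω₂ p u v = -Ω₂ p v u) ∧
      (∀ p u, (∀ v, Ω₂ p u v = 0) → u = 0) ∧
      (∀ p w, Ω₂ p (V p) w = fderiv ℝ H p w) ∧
      ∀ (a b : ℝ) (c c' c'' : ℝ → EuclideanSpace ℝ (Fin n)),
        (∀ t ∈ Set.Ioo a b, HasDerivAt c (c' t) t) →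
        (∀ t ∈ Set.Ioo a b, HasDerivAt c' (c'' t) t) →
        ((∀ t ∈ Set.Ioo a b, c'' t = gradient f (c t) + F (c t) (c' t)) ↔
          ∀ t ∈ Set.Ioo a b,
            HasDerivAt (fun s => (c s, c' s)) (V (c t, c' t)) t) := by
  have hΩ : ∀ p, Ω₂ p = twistedSymplecticForm (F p.1) := fun p => funext₂ (hΩ₂ p)
  have hf_diff : Differentiable ℝ f := by
    rw [funext hf]
    exact ((hX.differentiable one_ne_zero).norm_sq ℝ).const_mul _
  refine ⟨fun p => hΩ p ▸ twistedSymplecticForm_antisymm fun u v => ?_,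
    fun p _ => hΩ p ▸ eq_zero_of_twistedSymplecticForm_eq_zero (F p.1), fun p w => ?_,
    fun a b c c' c'' hc hc' => forall₂_congr fun t ht => ?_⟩
  · rw [hF]
    exact inner_sub_adjoint_apply_swap _ u v
  · rw [hΩ, hV, twistedSymplecticForm_hamiltonVector, funext hH,
      (hasFDerivAt_half_norm_sq_snd_sub_comp_fst (hf_diff p.1)).fderiv]
    simp
  · rw [hV, hasDerivAt_prodMk_iff_eq (hc t ht) (hc' t ht)]
end

section
/- A C² curve (x₁, x₂) : ℝ → ℝ² satisfies the pendulum geometric dynamics d²x₁/dt² = x₁ − 2 dx₂/dt, d²x₂/dt² = x₂ + 2 dx₁/dt if and only if there exist constants b₁, b₂, b₃, b₄ ∈ ℝ such that x₁(t) = b₁ cos t + b₂ sin t + b₃ t cos t + b₄ t sin t and x₂(t) = b₁ sin t − b₂ cos t + b₃ t sin t − b₄ t cos t for all t ∈ ℝ (a family of spirals). -/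
/-!
Write `z = x₁ + i x₂`. The system becomes `z'' = 2i z' - i² z`, a linear equation whose
characteristic polynomial `(X - i)²` has the double root `i`. Multiplying by `e^{-it}` turns it
into `w'' = 0`, so `w = e^{-it} z` is affine and `z = e^{it} (c + d t)`; the real and imaginary
parts of this are the spirals, with `c = b₁ - b₂ i` and `d = b₃ - b₄ i`.
-/

open Complex

theorem eq_add_smul_of_hasDerivAt_of_hasDerivAt_zero {E : Type*} [NormedAddCommGroup E]
    [NormedSpace ℝ E] {f f' : ℝ → E} (hf : ∀ t, HasDerivAt f (f' t) t)
    (hf' : ∀ t, HasDerivAt f' 0 t) (t : ℝ) : f t = f 0 + t • f' 0 := by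
  have hf'_const : ∀ s, f' s = f' 0 := fun s =>
    is_const_of_deriv_eq_zero (fun s => (hf' s).differentiableAt) (fun s => (hf' s).deriv) s 0
  have hg : ∀ s, HasDerivAt (fun s => f s - s • f' 0) 0 s := fun s => by
    have := (hf s).sub ((hasDerivAt_id s).smul_const (f' 0))
    rwa [hf'_const s, one_smul, sub_self] at this
  have hg_const :=
    is_const_of_deriv_eq_zero (fun s => (hg s).differentiableAt) (fun s => (hg s).deriv) t 0
  rw [zero_smul, sub_zero, sub_eq_iff_eq_add] at hg_const
  rw [hg_const, add_comm]

theorem hasDerivAt_cexp_mul_ofReal (μ : ℂ) (t : ℝ) :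
    HasDerivAt (fun s : ℝ => cexp (μ * s)) (μ * cexp (μ * t)) t :=
  ((hasDerivAt_id t).ofReal_comp.const_mul μ).cexp.congr_deriv (by simp [mul_comm])

theorem hasDerivAt_cexp_mul_ofReal_mul_affine (μ c d : ℂ) (t : ℝ) :
    HasDerivAt (fun s : ℝ => cexp (μ * s) * (c + d * s))
      (cexp (μ * t) * ((μ * c + d) + μ * d * t)) t := by
  have hp : HasDerivAt (fun s : ℝ => c + d * (s : ℂ)) d t :=
    ((hasDerivAt_id t).ofReal_comp.const_mul d).const_add c |>.congr_deriv (by simp)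
  exact ((hasDerivAt_cexp_mul_ofReal μ t).mul hp).congr_deriv (by ring)

theorem deriv_cexp_mul_ofReal_mul_affine (μ c d : ℂ) :
    deriv (fun s : ℝ => cexp (μ * s) * (c + d * s)) =
      fun t : ℝ => cexp (μ * t) * ((μ * c + d) + μ * d * t) :=
  funext fun t => (hasDerivAt_cexp_mul_ofReal_mul_affine μ c d t).deriv

theorem deriv_deriv_eq_iff_exists_eq_cexp_mul_affine (μ : ℂ) {z : ℝ → ℂ}
    (hz : Differentiable ℝ z) (hz' : Differentiable ℝ (deriv z)) :
    (∀ t, deriv (deriv z) t = 2 * μ * deriv z t - μ ^ 2 * z t) ↔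
      ∃ c d : ℂ, ∀ t : ℝ, z t = cexp (μ * t) * (c + d * t) := by
  constructor
  · intro hode
    set w : ℝ → ℂ := fun t => cexp (-μ * t) * z t
    set w' : ℝ → ℂ := fun t => cexp (-μ * t) * (deriv z t - μ * z t)
    have hw : ∀ t, HasDerivAt w (w' t) t := fun t =>
      ((hasDerivAt_cexp_mul_ofReal (-μ) t).mul (hz t).hasDerivAt).congr_deriv (by ring)
    have hw' : ∀ t, HasDerivAt w' 0 t := fun t =>
      ((hasDerivAt_cexp_mul_ofReal (-μ) t).mul
        ((hz' t).hasDerivAt.sub ((hz t).hasDerivAt.const_mul μ))).congr_deriv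
        (by rw [hode t, Pi.sub_apply]; ring)
    refine ⟨w 0, w' 0, fun t => ?_⟩
    have hw_affine := eq_add_smul_of_hasDerivAt_of_hasDerivAt_zero hw hw' t
    rw [real_smul, mul_comm] at hw_affine
    rw [← hw_affine, ← mul_assoc, ← Complex.exp_add]
    simp
  · rintro ⟨c, d, hzcd⟩ t
    simp only [funext hzcd, deriv_cexp_mul_ofReal_mul_affine]
    ring

theorem hasDerivAt_ofReal_add_ofReal_mul_I {f g : ℝ → ℝ} {f' g' t : ℝ} (hf : HasDerivAt f f' t)
    (hg : HasDerivAt g g' t) :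
    HasDerivAt (fun s => (f s : ℂ) + g s * I) (f' + g' * I) t :=
  hf.ofReal_comp.add (hg.ofReal_comp.mul_const I)

theorem deriv_ofReal_add_ofReal_mul_I {f g : ℝ → ℝ} (hf : Differentiable ℝ f)
    (hg : Differentiable ℝ g) :
    deriv (fun s => (f s : ℂ) + g s * I) = fun t => ((deriv f t : ℝ) : ℂ) + (deriv g t : ℝ) * I :=
  funext fun t => (hasDerivAt_ofReal_add_ofReal_mul_I (hf t).hasDerivAt (hg t).hasDerivAt).deriv

theorem differentiable_ofReal_add_ofReal_mul_I {f g : ℝ → ℝ} (hf : Differentiable ℝ f)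
    (hg : Differentiable ℝ g) : Differentiable ℝ (fun s => (f s : ℂ) + g s * I) := fun t =>
  (hasDerivAt_ofReal_add_ofReal_mul_I (hf t).hasDerivAt (hg t).hasDerivAt).differentiableAt

theorem ofReal_add_ofReal_mul_I_eq_cexp_mul_affine_iff (x y t b₁ b₂ b₃ b₄ : ℝ) :
    (x : ℂ) + y * I = cexp (I * t) * ((b₁ - b₂ * I) + (b₃ - b₄ * I) * t) ↔
      x = b₁ * Real.cos t + b₂ * Real.sin t + b₃ * t * Real.cos t + b₄ * t * Real.sin t ∧
      y = b₁ * Real.sin t - b₂ * Real.cos t + b₃ * t * Real.sin t - b₄ * t * Real.cos t := by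
  rw [mul_comm I, Complex.ext_iff]
  simp only [add_re, ofReal_re, mul_re, I_re, mul_zero, ofReal_im, I_im, mul_one, sub_self,
    add_zero, exp_ofReal_mul_I_re, sub_re, sub_zero, sub_im, mul_im, zero_sub, exp_ofReal_mul_I_im,
    add_im, neg_mul, zero_add]
  constructor <;> rintro ⟨hx, hy⟩ <;> constructor <;> linarith

/-- A C² curve `(x₁, x₂) : ℝ → ℝ²` satisfies the pendulum geometric
dynamics `x₁'' = x₁ - 2 x₂'`, `x₂'' = x₂ + 2 x₁'` iff there are constants
`b₁, b₂, b₃, b₄` with `x₁ t = b₁ cos t + b₂ sin t + b₃ t cos t + b₄ t sin t` and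
`x₂ t = b₁ sin t - b₂ cos t + b₃ t sin t - b₄ t cos t` (a family of spirals). -/
theorem pendulum_geometric_dynamics_solutions
    (x₁ x₂ : ℝ → ℝ) (h₁ : ContDiff ℝ 2 x₁) (h₂ : ContDiff ℝ 2 x₂) :
    (∀ t : ℝ, deriv (deriv x₁) t = x₁ t - 2 * deriv x₂ t ∧
        deriv (deriv x₂) t = x₂ t + 2 * deriv x₁ t) ↔
      ∃ b₁ b₂ b₃ b₄ : ℝ, ∀ t : ℝ,
        x₁ t = b₁ * Real.cos t + b₂ * Real.sin t
          + b₃ * t * Real.cos t + b₄ * t * Real.sin t ∧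
        x₂ t = b₁ * Real.sin t - b₂ * Real.cos t
          + b₃ * t * Real.sin t - b₄ * t * Real.cos t := by
  have hx₁ := h₁.differentiable two_ne_zero
  have hx₂ := h₂.differentiable two_ne_zero
  have hx₁' := h₁.differentiable_deriv_two
  have hx₂' := h₂.differentiable_deriv_two
  set z : ℝ → ℂ := fun t => x₁ t + x₂ t * I
  have hz' : deriv z = fun t => ((deriv x₁ t : ℝ) : ℂ) + (deriv x₂ t : ℝ) * I :=
    deriv_ofReal_add_ofReal_mul_I hx₁ hx₂
  have hz'' : deriv (deriv z) = fun t =>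
      ((deriv (deriv x₁) t : ℝ) : ℂ) + (deriv (deriv x₂) t : ℝ) * I := by
    rw [hz']; exact deriv_ofReal_add_ofReal_mul_I hx₁' hx₂'
  have hode : ∀ t, (deriv (deriv x₁) t = x₁ t - 2 * deriv x₂ t ∧
      deriv (deriv x₂) t = x₂ t + 2 * deriv x₁ t) ↔
      deriv (deriv z) t = 2 * I * deriv z t - I ^ 2 * z t := fun t => by
    rw [hz'', hz', Complex.ext_iff]
    simp only [add_re, ofReal_re, mul_re, I_re, mul_zero, ofReal_im, I_im, mul_one, sub_self,
      add_zero, I_sq, neg_mul, one_mul, neg_add_rev, sub_re, re_ofNat, im_ofNat, zero_mul, mul_im,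
      add_im, zero_add, zero_sub, neg_re, neg_zero, sub_neg_eq_add, sub_im, neg_im, z]
    constructor <;> rintro ⟨hre, him⟩ <;> constructor <;> linarith
  simp_rw [hode]
  rw [deriv_deriv_eq_iff_exists_eq_cexp_mul_affine I
    (differentiable_ofReal_add_ofReal_mul_I hx₁ hx₂)
    (hz' ▸ differentiable_ofReal_add_ofReal_mul_I hx₁' hx₂')]
  simp_rw [← ofReal_add_ofReal_mul_I_eq_cexp_mul_affine_iff]
  constructor
  · rintro ⟨c, d, h⟩
    exact ⟨c.re, -c.im, d.re, -d.im, by simpa [Complex.re_add_im] using h⟩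
  · rintro ⟨b₁, b₂, b₃, b₄, h⟩
    exact ⟨_, _, h⟩
end

section
/- Let σ, r, b ∈ ℝ and let x = (x₁, x₂, x₃) : I → ℝ³ be a C¹ solution of the Lorenz system x₁′ = −σx₁ + σx₂, x₂′ = −x₁x₃ + rx₁ − x₂, x₃′ = x₁x₂ − bx₃. Then x is C² and satisfies the Lorenz geometric dynamics: x₁″ = ∂f/∂x₁ + (σ + x₃ − r) x₂′ − x₂ x₃′, x₂″ = ∂f/∂x₂ + (r − x₃ − σ) x₁′ − 2x₁ x₃′, x₃″ = ∂f/∂x₃ + x₂ x₁′ + 2x₁ x₂′, where f(x₁,x₂,x₃) = ½[(−σx₁ + σx₂)² + (−x₁x₃ + rx₁ − x₂)² + (x₁x₂ − bx₃)²], all evaluated along x(t). -/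
/-!
Differentiating the Lorenz equations once more along a solution gives `x″ = DX(x) x′`.
Since `X` is affine in each coordinate separately, `∂f/∂xⱼ = Σᵢ Xᵢ ∂Xᵢ/∂xⱼ`, and the three
geometric equations become polynomial identities in `x` once `x′ = X(x)` is substituted.
-/

open Filter Topology

theorem hasDerivAt_deriv_of_eventually_hasDerivAt {𝕜 E : Type*} [NontriviallyNormedField 𝕜]
    [NormedAddCommGroup E] [NormedSpace 𝕜 E] {x F : 𝕜 → E} {F' : E} {t : 𝕜}
    (hx : ∀ᶠ s in 𝓝 t, HasDerivAt x (F s) s) (hF : HasDerivAt F F' t) :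
    HasDerivAt (deriv x) F' t :=
  hF.congr_of_eventuallyEq (hx.mono fun _ hs => hs.deriv)

theorem hasDerivAt_half_sum_sq_affine (A B C D E F u : ℝ) :
    HasDerivAt (fun u : ℝ => (1 / 2) * ((A * u + B) ^ 2 + (C * u + D) ^ 2 + (E * u + F) ^ 2))
      ((A * u + B) * A + (C * u + D) * C + (E * u + F) * E) u := by
  have affine : ∀ P Q : ℝ, HasDerivAt (fun u : ℝ => P * u + Q) P u := fun P Q => by
    simpa using ((hasDerivAt_id u).const_mul P).add_const Q
  refine ((((affine A B).pow 2).add ((affine C D).pow 2)).add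
    ((affine E F).pow 2)).const_mul (1 / 2) |>.congr_deriv ?_
  push_cast
  ring

noncomputable def lorenzEnergy (σ r b u v w : ℝ) : ℝ :=
  (1 / 2) * ((-σ * u + σ * v) ^ 2 + (-u * w + r * u - v) ^ 2 + (u * v - b * w) ^ 2)

section LorenzEnergy

variable (σ r b u v w : ℝ)

theorem deriv_lorenzEnergy_x₁ :
    deriv (fun u => lorenzEnergy σ r b u v w) u =
      -σ * (-σ * u + σ * v) + (r - w) * (-u * w + r * u - v) + v * (u * v - b * w) := by
  have hline : (fun u => lorenzEnergy σ r b u v w) = fun u => (1 / 2) *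
      ((-σ * u + σ * v) ^ 2 + ((r - w) * u + -v) ^ 2 + (v * u + -(b * w)) ^ 2) :=
    funext fun u => by rw [lorenzEnergy]; ring
  rw [hline, (hasDerivAt_half_sum_sq_affine _ _ _ _ _ _ u).deriv]
  ring

theorem deriv_lorenzEnergy_x₂ :
    deriv (fun v => lorenzEnergy σ r b u v w) v =
      σ * (-σ * u + σ * v) - (-u * w + r * u - v) + u * (u * v - b * w) := by
  have hline : (fun v => lorenzEnergy σ r b u v w) = fun v => (1 / 2) *
      ((σ * v + -σ * u) ^ 2 + (-1 * v + (-u * w + r * u)) ^ 2 + (u * v + -(b * w)) ^ 2) :=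
    funext fun v => by rw [lorenzEnergy]; ring
  rw [hline, (hasDerivAt_half_sum_sq_affine _ _ _ _ _ _ v).deriv]
  ring

theorem deriv_lorenzEnergy_x₃ :
    deriv (fun w => lorenzEnergy σ r b u v w) w =
      -u * (-u * w + r * u - v) - b * (u * v - b * w) := by
  have hline : (fun w => lorenzEnergy σ r b u v w) = fun w => (1 / 2) *
      ((0 * w + (-σ * u + σ * v)) ^ 2 + (-u * w + (r * u - v)) ^ 2 + (-b * w + u * v) ^ 2) :=
    funext fun w => by rw [lorenzEnergy]; ring
  rw [hline, (hasDerivAt_half_sum_sq_affine _ _ _ _ _ _ w).deriv]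
  ring

end LorenzEnergy

/-- Every C¹ solution of the Lorenz system
`x₁' = -σx₁ + σx₂`, `x₂' = -x₁x₃ + rx₁ - x₂`, `x₃' = x₁x₂ - bx₃` is C² and satisfies
the Lorenz geometric dynamics
`x₁'' = ∂f/∂x₁ + (σ + x₃ - r) x₂' - x₂ x₃'`,
`x₂'' = ∂f/∂x₂ + (r - x₃ - σ) x₁' - 2x₁ x₃'`,
`x₃'' = ∂f/∂x₃ + x₂ x₁' + 2x₁ x₂'`,
where `f = ½[(-σx₁+σx₂)² + (-x₁x₃+rx₁-x₂)² + (x₁x₂-bx₃)²]` is the energy. -/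
theorem lorenz_solution_geometric_dynamics (σ r b : ℝ)
    (f : ℝ → ℝ → ℝ → ℝ)
    (hf : ∀ u v w : ℝ, f u v w =
      (1 / 2) * ((-σ * u + σ * v) ^ 2 + (-u * w + r * u - v) ^ 2 + (u * v - b * w) ^ 2))
    (a c : ℝ) (x₁ x₂ x₃ : ℝ → ℝ)
    (h₁ : ∀ t ∈ Set.Ioo a c, HasDerivAt x₁ (-σ * x₁ t + σ * x₂ t) t)
    (h₂ : ∀ t ∈ Set.Ioo a c, HasDerivAt x₂ (-x₁ t * x₃ t + r * x₁ t - x₂ t) t)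
    (h₃ : ∀ t ∈ Set.Ioo a c, HasDerivAt x₃ (x₁ t * x₂ t - b * x₃ t) t) :
    ∀ t ∈ Set.Ioo a c,
      HasDerivAt (deriv x₁)
        (deriv (fun u => f u (x₂ t) (x₃ t)) (x₁ t)
          + (σ + x₃ t - r) * deriv x₂ t - x₂ t * deriv x₃ t) t ∧
      HasDerivAt (deriv x₂)
        (deriv (fun v => f (x₁ t) v (x₃ t)) (x₂ t)
          + (r - x₃ t - σ) * deriv x₁ t - 2 * x₁ t * deriv x₃ t) t ∧
      HasDerivAt (deriv x₃)
        (deriv (fun w => f (x₁ t) (x₂ t) w) (x₃ t)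
          + x₂ t * deriv x₁ t + 2 * x₁ t * deriv x₂ t) t := by
  obtain rfl : f = lorenzEnergy σ r b := funext₃ hf
  intro t ht
  have hnear : ∀ᶠ s in 𝓝 t, s ∈ Set.Ioo a c := Ioo_mem_nhds ht.1 ht.2
  have H₁ := h₁ t ht
  have H₂ := h₂ t ht
  have H₃ := h₃ t ht
  have D₁ := hasDerivAt_deriv_of_eventually_hasDerivAt (hnear.mono h₁)
    ((H₁.const_mul (-σ)).add (H₂.const_mul σ))
  have D₂ := hasDerivAt_deriv_of_eventually_hasDerivAt (hnear.mono h₂)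
    (((H₁.neg.mul H₃).add (H₁.const_mul r)).sub H₂)
  rw [Pi.neg_apply] at D₂
  have D₃ := hasDerivAt_deriv_of_eventually_hasDerivAt (hnear.mono h₃)
    ((H₁.mul H₂).sub (H₃.const_mul b))
  rw [deriv_lorenzEnergy_x₁, deriv_lorenzEnergy_x₂, deriv_lorenzEnergy_x₃,
    H₁.deriv, H₂.deriv, H₃.deriv]
  refine ⟨D₁.congr_deriv ?_, D₂.congr_deriv ?_, D₃.congr_deriv ?_⟩ <;> ring
end

section
/- Let A, B, C ∈ ℝ with A ≠ 0, B ≠ 0, C ≠ 0, and let X be the ABC vector field X(x₁, x₂, x₃) = (A sin x₃ + C cos x₂, B sin x₁ + A cos x₃, C sin x₂ + B cos x₁). Then every equilibrium point of the ABC flow lies on the surface sin x₁ sin x₂ sin x₃ + cos x₁ cos x₂ cos x₃ = 0; that is, if X(x₁, x₂, x₃) = 0 then sin x₁ sin x₂ sin x₃ + cos x₁ cos x₂ cos x₃ = 0. -/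
open Real

/-- For `A, B, C ≠ 0`, every equilibrium point of the ABC flow
`X(x₁,x₂,x₃) = (A sin x₃ + C cos x₂, B sin x₁ + A cos x₃, C sin x₂ + B cos x₁)`
lies on the surface `sin x₁ sin x₂ sin x₃ + cos x₁ cos x₂ cos x₃ = 0`. -/
theorem abc_equilibria_on_surface (A B C : ℝ)
    (hA : A ≠ 0) (hB : B ≠ 0) (hC : C ≠ 0) :
    ∀ x₁ x₂ x₃ : ℝ,
      (A * sin x₃ + C * cos x₂ = 0 ∧
        B * sin x₁ + A * cos x₃ = 0 ∧
        C * sin x₂ + B * cos x₁ = 0) →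
      sin x₁ * sin x₂ * sin x₃ + cos x₁ * cos x₂ * cos x₃ = 0 := by
  rintro x₁ x₂ x₃ ⟨h1, h2, h3⟩
  have key : A * B * C * (sin x₁ * sin x₂ * sin x₃ + cos x₁ * cos x₂ * cos x₃) = 0 := by
    linear_combination (B*C*sin x₁*sin x₂)*h1 - (C^2*cos x₂*sin x₂)*h2 + (A*C*cos x₂*cos x₃)*h3
  have hABC : A * B * C ≠ 0 := by positivity
  exact (mul_eq_zero.mp key).resolve_left hABC
end
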